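/- arXiv:2302.12183 — 2 statements merged into one kernel-verified Lean document; each statement's English description precedes it below -/
import Mathlib

section
/- Let ψ : [a,b] → ℝ be C¹, increasing with ψ' > 0, let 0 < α < 1 and 0 ≤ γ ≤ 1. If f is continuous on (a,b] and there is M > 0 with |(ψ(x) − ψ(a))^γ f(x)| < M for all x ∈ (a,b], and γ < α, then lim_{x → a⁺} (I_{a+}^{α;ψ} f)(x) = 0. -/
/-!
On `[a, b]` the derivative of `ψ` lies between two constants `0 < c` and `C`, so
`ψ v - ψ u ≥ c (v - u)`. Together with `|f s| ≤ M (ψ s - ψ a)^(-γ)` this bounds the integrand of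
`I^{α;ψ} f (x)` by a multiple of the kernel `(x - s)^(α-1) (s - a)^(-γ)`, whose integral over
`[a, x]` is `O((x - a)^(α-γ))`. Since `γ < α`, this tends to `0` as `x → a⁺`.
-/

open Real MeasureTheory Set

/-- The left ψ-Riemann–Liouville fractional integral of order α with base point a. -/
noncomputable def psiRL (ψ : ℝ → ℝ) (α a : ℝ) (f : ℝ → ℝ) (x : ℝ) : ℝ :=
  (1 / Real.Gamma α) * ∫ s in a..x, deriv ψ s * (ψ x - ψ s) ^ (α - 1) * f s

section Kernel

variable {a x p q : ℝ}

lemma intervalIntegrable_sub_const_rpow (hq : -1 < q) :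
    IntervalIntegrable (fun s => (s - a) ^ q) volume a x := by
  simpa using
    (intervalIntegral.intervalIntegrable_rpow' (a := 0) (b := x - a) hq).comp_sub_right a

lemma intervalIntegrable_const_sub_rpow (hp : -1 < p) :
    IntervalIntegrable (fun s => (x - s) ^ p) volume a x := by
  simpa using
    ((intervalIntegral.intervalIntegrable_rpow' (a := 0) (b := x - a) hp).comp_sub_left x).symm

lemma integral_sub_const_rpow (hq : -1 < q) :
    ∫ s in a..x, (s - a) ^ q = (x - a) ^ (q + 1) / (q + 1) := by
  rw [intervalIntegral.integral_comp_sub_right (fun u => u ^ q), sub_self, integral_rpow (.inl hq),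
    zero_rpow (by linarith), sub_zero]

lemma integral_const_sub_rpow (hp : -1 < p) :
    ∫ s in a..x, (x - s) ^ p = (x - a) ^ (p + 1) / (p + 1) := by
  rw [intervalIntegral.integral_comp_sub_left (fun u => u ^ p), sub_self, integral_rpow (.inl hp),
    zero_rpow (by linarith), sub_zero]

/-- Whichever of `x - s`, `s - a` is larger is at least `(x - a) / 2`, so one factor of the
kernel is bounded by the corresponding power of `(x - a) / 2`. -/
lemma rpow_mul_rpow_le_add (hp : p ≤ 0) (hq : q ≤ 0) (hax : a < x) {s : ℝ} (hs : s ∈ Icc a x) :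
    (x - s) ^ p * (s - a) ^ q
      ≤ ((x - a) / 2) ^ p * (s - a) ^ q + (x - s) ^ p * ((x - a) / 2) ^ q := by
  have hhalf : 0 < (x - a) / 2 := by linarith
  have hxs : 0 ≤ (x - s) ^ p := rpow_nonneg (by linarith [hs.2]) p
  have hsa : 0 ≤ (s - a) ^ q := rpow_nonneg (by linarith [hs.1]) q
  rcases le_total ((x - a) / 2) (s - a) with h | h
  · have : (s - a) ^ q ≤ ((x - a) / 2) ^ q := rpow_le_rpow_of_nonpos hhalf h hq
    nlinarith [rpow_nonneg hhalf.le p]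
  · have : (x - s) ^ p ≤ ((x - a) / 2) ^ p := rpow_le_rpow_of_nonpos hhalf (by linarith) hp
    nlinarith [rpow_nonneg hhalf.le q]

lemma norm_integral_le_of_norm_le_rpow_mul_rpow {F : ℝ → ℝ} {K : ℝ} (hax : a < x)
    (hp : -1 < p) (hp0 : p ≤ 0) (hq : -1 < q) (hq0 : q ≤ 0) (hK : 0 ≤ K)
    (hF : ∀ s ∈ Ioo a x, ‖F s‖ ≤ K * ((x - s) ^ p * (s - a) ^ q)) :
    ‖∫ s in a..x, F s‖
      ≤ K * (1 / (2 ^ p * (q + 1)) + 1 / (2 ^ q * (p + 1))) * (x - a) ^ (p + q + 1) := by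
  set g : ℝ → ℝ := fun s => ((x - a) / 2) ^ p * (s - a) ^ q + (x - s) ^ p * ((x - a) / 2) ^ q
  have hg : IntervalIntegrable g volume a x :=
    ((intervalIntegrable_sub_const_rpow hq).const_mul _).add
      ((intervalIntegrable_const_sub_rpow hp).mul_const _)
  have hFg : ∀ᵐ s, s ∈ Ioc a x → ‖F s‖ ≤ K * g s := by
    filter_upwards [Ioo_ae_eq_Ioc.mem_iff] with s hs hsIoc
    exact (hF s (hs.2 hsIoc)).trans (mul_le_mul_of_nonneg_left
      (rpow_mul_rpow_le_add hp0 hq0 hax (Ioo_subset_Icc_self (hs.2 hsIoc))) hK)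
  have ht : 0 < x - a := sub_pos.2 hax
  calc ‖∫ s in a..x, F s‖ ≤ ∫ s in a..x, K * g s :=
        intervalIntegral.norm_integral_le_of_norm_le hax.le hFg (hg.const_mul K)
    _ = K * (((x - a) / 2) ^ p * ((x - a) ^ (q + 1) / (q + 1))
          + (x - a) ^ (p + 1) / (p + 1) * ((x - a) / 2) ^ q) := by
      rw [intervalIntegral.integral_const_mul, intervalIntegral.integral_add
        ((intervalIntegrable_sub_const_rpow hq).const_mul _)
        ((intervalIntegrable_const_sub_rpow hp).mul_const _),
        intervalIntegral.integral_const_mul, intervalIntegral.integral_mul_const,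
        integral_sub_const_rpow hq, integral_const_sub_rpow hp]
    _ = _ := by
      rw [div_rpow ht.le zero_le_two, div_rpow ht.le zero_le_two, rpow_add_one ht.ne',
        rpow_add_one ht.ne', rpow_add_one ht.ne', rpow_add ht]
      field_simp

end Kernel

lemma abs_le_mul_rpow_neg_of_abs_rpow_mul_le {u y γ M : ℝ} (hu : 0 < u) (h : |u ^ γ * y| ≤ M) :
    |y| ≤ M * u ^ (-γ) := by
  rw [abs_mul, abs_of_pos (rpow_pos_of_pos hu γ)] at h
  rw [rpow_neg hu.le, ← div_eq_mul_inv, le_div_iff₀ (rpow_pos_of_pos hu γ)]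
  linarith

section psiRL

variable {ψ f : ℝ → ℝ} {a b α γ c C M : ℝ}

lemma norm_psiRL_integrand_le (hα1 : α ≤ 1) (hγ0 : 0 ≤ γ) (hc : 0 < c)
    (hlip : ∀ u ∈ Icc a b, ∀ v ∈ Icc a b, u ≤ v → c * (v - u) ≤ ψ v - ψ u)
    (hderiv : ∀ s ∈ Icc a b, ‖deriv ψ s‖ ≤ C)
    (hbound : ∀ s ∈ Ioc a b, |(ψ s - ψ a) ^ γ * f s| ≤ M) {x s : ℝ} (hxb : x ≤ b)
    (hs : s ∈ Ioo a x) :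
    ‖deriv ψ s * (ψ x - ψ s) ^ (α - 1) * f s‖
      ≤ C * M * c ^ (α - 1) * c ^ (-γ) * ((x - s) ^ (α - 1) * (s - a) ^ (-γ)) := by
  have hsb : s ∈ Ioc a b := ⟨hs.1, hs.2.le.trans hxb⟩
  have hxs : 0 < c * (x - s) := mul_pos hc (sub_pos.2 hs.2)
  have hsa : 0 < c * (s - a) := mul_pos hc (sub_pos.2 hs.1)
  have hψxs : c * (x - s) ≤ ψ x - ψ s :=
    hlip s (Ioc_subset_Icc_self hsb) x ⟨hs.1.le.trans hs.2.le, hxb⟩ hs.2.le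
  have hψsa : c * (s - a) ≤ ψ s - ψ a :=
    hlip a ⟨le_rfl, hsb.1.le.trans hsb.2⟩ s (Ioc_subset_Icc_self hsb) hs.1.le
  have hkernel : (ψ x - ψ s) ^ (α - 1) ≤ c ^ (α - 1) * (x - s) ^ (α - 1) := by
    rw [← mul_rpow hc.le (sub_pos.2 hs.2).le]
    exact rpow_le_rpow_of_nonpos hxs hψxs (by linarith)
  have hf : |f s| ≤ M * (c ^ (-γ) * (s - a) ^ (-γ)) := by
    rw [← mul_rpow hc.le (sub_pos.2 hs.1).le]
    refine (abs_le_mul_rpow_neg_of_abs_rpow_mul_le (hsa.trans_le hψsa) (hbound s hsb)).trans ?_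
    exact mul_le_mul_of_nonneg_left (rpow_le_rpow_of_nonpos hsa hψsa (by linarith))
      ((abs_nonneg _).trans (hbound s hsb))
  rw [norm_mul, norm_mul, Real.norm_eq_abs (f s),
    Real.norm_of_nonneg (rpow_nonneg (hxs.le.trans hψxs) _)]
  calc ‖deriv ψ s‖ * (ψ x - ψ s) ^ (α - 1) * |f s|
      ≤ C * (c ^ (α - 1) * (x - s) ^ (α - 1)) * (M * (c ^ (-γ) * (s - a) ^ (-γ))) := by
        have hC : ‖deriv ψ s‖ ≤ C := hderiv s (Ioc_subset_Icc_self hsb)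
        have hC0 : 0 ≤ C := (norm_nonneg _).trans hC
        have hxs_pow : 0 ≤ (x - s) ^ (α - 1) := rpow_nonneg (sub_pos.2 hs.2).le _
        have hψxs_pow : 0 ≤ (ψ x - ψ s) ^ (α - 1) := rpow_nonneg (hxs.le.trans hψxs) _
        gcongr
    _ = _ := by ring

lemma exists_abs_psiRL_le_mul_rpow (hα0 : 0 < α) (hα1 : α ≤ 1) (hγ0 : 0 ≤ γ) (hγ1 : γ < 1)
    (hc : 0 < c) (hlip : ∀ u ∈ Icc a b, ∀ v ∈ Icc a b, u ≤ v → c * (v - u) ≤ ψ v - ψ u)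
    (hderiv : ∀ s ∈ Icc a b, ‖deriv ψ s‖ ≤ C)
    (hbound : ∀ s ∈ Ioc a b, |(ψ s - ψ a) ^ γ * f s| ≤ M) :
    ∃ K, ∀ x ∈ Ioc a b, |psiRL ψ α a f x| ≤ K * (x - a) ^ (α - γ) := by
  refine ⟨1 / Gamma α * (C * M * c ^ (α - 1) * c ^ (-γ) *
    (1 / (2 ^ (α - 1) * (-γ + 1)) + 1 / (2 ^ (-γ) * (α - 1 + 1)))), fun x hx => ?_⟩
  have hC : 0 ≤ C := (norm_nonneg _).trans (hderiv x (Ioc_subset_Icc_self hx))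
  have hM : 0 ≤ M := (abs_nonneg _).trans (hbound x hx)
  have hI := norm_integral_le_of_norm_le_rpow_mul_rpow hx.1 (by linarith) (by linarith)
    (by linarith) (by linarith) (by positivity)
    fun s hs => norm_psiRL_integrand_le hα1 hγ0 hc hlip hderiv hbound hx.2 hs
  rw [show α - 1 + -γ + 1 = α - γ by ring] at hI
  rw [psiRL, abs_mul, abs_of_pos (one_div_pos.2 (Gamma_pos_of_pos hα0)), mul_assoc]
  exact mul_le_mul_of_nonneg_left hI (one_div_pos.2 (Gamma_pos_of_pos hα0)).le

end psiRL

lemma exists_pos_le_deriv_and_norm_deriv_le {ψ : ℝ → ℝ} {a b : ℝ} (hab : a < b)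
    (hψ : ContDiffOn ℝ 1 ψ (Icc a b)) (hψ' : ∀ x ∈ Icc a b, 0 < deriv ψ x) :
    ∃ c > 0, ∃ C, ∀ x ∈ Icc a b, c ≤ deriv ψ x ∧ ‖deriv ψ x‖ ≤ C := by
  have hcont : ContinuousOn (deriv ψ) (Icc a b) :=
    (hψ.continuousOn_derivWithin (uniqueDiffOn_Icc hab) le_rfl).congr fun x hx =>
      ((differentiableAt_of_deriv_ne_zero (hψ' x hx).ne').derivWithin
        (uniqueDiffOn_Icc hab x hx)).symm
  obtain ⟨x₀, hx₀, hmin⟩ := isCompact_Icc.exists_isMinOn (nonempty_Icc.2 hab.le) hcont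
  obtain ⟨C, hC⟩ := isCompact_Icc.exists_bound_of_continuousOn hcont
  exact ⟨deriv ψ x₀, hψ' x₀ hx₀, C, fun x hx => ⟨hmin hx, hC x hx⟩⟩

theorem psiRL_tendsto_zero_general (a b α γ : ℝ) (ψ f : ℝ → ℝ) (hab : a < b)
    (hψ : ContDiffOn ℝ 1 ψ (Icc a b))
    (hψ' : ∀ x ∈ Icc a b, 0 < deriv ψ x)
    (hα0 : 0 < α) (hα1 : α < 1) (hγ0 : 0 ≤ γ)
    (M : ℝ)
    (hbound : ∀ x ∈ Ioc a b, |(ψ x - ψ a) ^ γ * f x| < M)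
    (hγα : γ < α) :
    Filter.Tendsto (psiRL ψ α a f) (nhdsWithin a (Set.Ioi a)) (nhds 0) := by
  obtain ⟨c, hc, C, hderiv⟩ := exists_pos_le_deriv_and_norm_deriv_le hab hψ hψ'
  have hlip : ∀ u ∈ Icc a b, ∀ v ∈ Icc a b, u ≤ v → c * (v - u) ≤ ψ v - ψ u :=
    (convex_Icc a b).mul_sub_le_image_sub_of_le_deriv hψ.continuousOn
      ((hψ.differentiableOn one_ne_zero).mono interior_subset)
      fun x hx => (hderiv x (interior_subset hx)).1
  obtain ⟨K, hK⟩ := exists_abs_psiRL_le_mul_rpow hα0 hα1.le hγ0 (hγα.trans hα1) hc hlip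
    (fun s hs => (hderiv s hs).2) fun s hs => (hbound s hs).le
  have hlim : Filter.Tendsto (fun x => K * (x - a) ^ (α - γ)) (nhdsWithin a (Ioi a)) (nhds 0) := by
    have hcont : Continuous fun x : ℝ => K * (x - a) ^ (α - γ) :=
      continuous_const.mul ((continuous_sub_right a).rpow_const fun _ => .inr (by linarith))
    simpa [zero_rpow (sub_pos.2 hγα).ne'] using (hcont.tendsto a).mono_left nhdsWithin_le_nhds
  refine squeeze_zero_norm' ?_ hlim
  filter_upwards [Ioc_mem_nhdsGT_of_mem ⟨le_rfl, hab⟩] with x hx using hK x hx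

theorem psiRL_tendsto_zero (a b α γ : ℝ) (ψ f : ℝ → ℝ) (hab : a < b)
    (hψ : ContDiffOn ℝ 1 ψ (Icc a b)) (hmono : StrictMonoOn ψ (Icc a b))
    (hψ' : ∀ x ∈ Icc a b, 0 < deriv ψ x)
    (hα0 : 0 < α) (hα1 : α < 1) (hγ0 : 0 ≤ γ) (hγ1 : γ ≤ 1)
    (hf : ContinuousOn f (Ioc a b))
    (M : ℝ) (hM : 0 < M)
    (hbound : ∀ x ∈ Ioc a b, |(ψ x - ψ a) ^ γ * f x| < M)
    (hγα : γ < α) :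
    Filter.Tendsto (psiRL ψ α a f) (nhdsWithin a (Set.Ioi a)) (nhds 0) :=
  psiRL_tendsto_zero_general a b α γ ψ f hab hψ hψ' hα0 hα1 hγ0 M hbound hγα
end

section
/- Let J = [0,1], ψ : J → ℝ be C¹ increasing with ψ' > 0, let 0 < α < 1, 0 ≤ β ≤ 1 and γ = α + β(1−α). Suppose f : J × ℝ → ℝ is continuous, bounded by M > 0, and L-Lipschitz in the second variable, with L (ψ(1) − ψ(0))^α / Γ(α+1) < 1. Then the integral equation y(t) = (1/Γ(α)) ∫_0^t ψ'(s)(ψ(t) − ψ(s))^{α−1} f(s, y(s)) ds has a unique solution y in the weighted space C_{1−γ,ψ}(J). -/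
/-!
Substituting `x = ψ s`, the kernel `ψ'(s) (ψ t - ψ s)^(α-1)` integrates over `[u, v]` to
`((ψ t - ψ u)^α - (ψ t - ψ v)^α) / α`. Hence, for bounded `h`, `I^{α;ψ} h` is bounded by
`sup |h| · (ψ 1 - ψ 0)^α / Γ(α+1)` and is `α`-Hölder as a function of `ψ t`, so it is continuous on
`[0, 1]`. Consequently `Y ↦ I^{α;ψ} f(·, Y(·))` is a contraction of `C([0, 1])` with constant
`L (ψ 1 - ψ 0)^α / Γ(α+1)`, and its fixed point is a continuous solution, which lies in the weighted
space because `γ ≤ 1`. A weighted solution `z` is continuous on `(0, 1]`, so `I^{α;ψ} f(·, z(·))`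
is a continuous solution on `[0, 1]` that agrees with `z` on `(0, 1]`; it is therefore the fixed
point.
-/

open Real MeasureTheory Set

/-- Membership in the weighted space `C_{1-γ,ψ}([0,1])`: the weighted function
`t ↦ (ψ t - ψ 0)^(1-γ) y t` extends continuously to `[0,1]`. -/
def MemWeighted (ψ : ℝ → ℝ) (γ : ℝ) (y : ℝ → ℝ) : Prop :=
  ∃ g : ℝ → ℝ, ContinuousOn g (Icc (0:ℝ) 1) ∧
    ∀ t ∈ Ioc (0:ℝ) 1, g t = (ψ t - ψ 0) ^ (1 - γ) * y t

open Filter Topology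

noncomputable def psiKernel (ψ : ℝ → ℝ) (α t s : ℝ) : ℝ := deriv ψ s * (ψ t - ψ s) ^ (α - 1)

/-- The ψ-Riemann–Liouville fractional integral `I^{α;ψ}_{0+} h (t)`. -/
noncomputable def psiFracIntegral (ψ : ℝ → ℝ) (α : ℝ) (h : ℝ → ℝ) (t : ℝ) : ℝ :=
  1 / Gamma α * ∫ s in (0:ℝ)..t, psiKernel ψ α t s * h s

section Kernel

variable {ψ : ℝ → ℝ} {α u v t : ℝ}

lemma ae_restrict_Ioc_of_forall_Ioo {p : ℝ → Prop} (h : ∀ s ∈ Ioo u v, p s) :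
    ∀ᵐ s ∂volume.restrict (Ioc u v), p s := by
  rw [← Measure.restrict_congr_set Ioo_ae_eq_Ioc]
  exact ae_restrict_of_forall_mem measurableSet_Ioo h

lemma MonotoneOn.deriv_nonneg_of_mem_Ioo (hψm : MonotoneOn ψ (Icc u v)) {s : ℝ}
    (hs : s ∈ Ioo u v) : 0 ≤ deriv ψ s := by
  rw [← derivWithin_of_mem_nhds (Icc_mem_nhds hs.1 hs.2)]
  exact hψm.derivWithin_nonneg

lemma psiKernel_nonneg (hψm : MonotoneOn ψ (Icc u v)) {s : ℝ} (hs : s ∈ Ioo u v)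
    (hst : ψ s ≤ ψ t) : 0 ≤ psiKernel ψ α t s :=
  mul_nonneg (hψm.deriv_nonneg_of_mem_Ioo hs) (rpow_nonneg (sub_nonneg.2 hst) _)

lemma intervalIntegrable_psiKernel (hα : 0 < α) (huv : u ≤ v)
    (hψc : ContinuousOn ψ (Icc u v)) (hψd : DifferentiableOn ℝ ψ (Ioo u v))
    (hψm : MonotoneOn ψ (Icc u v)) :
    IntervalIntegrable (psiKernel ψ α t) volume u v := by
  have hIoo : Ioo (min u v) (max u v) = Ioo u v := by rw [min_eq_left huv, max_eq_right huv]
  have hrpow : IntervalIntegrable (fun x => (ψ t - x) ^ (α - 1)) volume (ψ u) (ψ v) := by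
    simpa using (intervalIntegral.intervalIntegrable_rpow' (r := α - 1) (a := ψ t - ψ u)
      (b := ψ t - ψ v) (by linarith)).comp_sub_left (ψ t)
  rw [← intervalIntegral.integrable_comp_mul_deriv_iff_of_deriv_nonneg (f' := deriv ψ)
    (uIcc_of_le huv ▸ hψc) (hIoo ▸ fun s hs => hψd.hasDerivAt (Ioo_mem_nhds hs.1 hs.2))
    (hIoo ▸ fun s hs => hψm.deriv_nonneg_of_mem_Ioo hs)] at hrpow
  simp only [Function.comp_def, mul_comm _ (deriv ψ _)] at hrpow
  exact hrpow

lemma integral_psiKernel (hα : 0 < α) (huv : u ≤ v)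
    (hψc : ContinuousOn ψ (Icc u v)) (hψd : DifferentiableOn ℝ ψ (Ioo u v))
    (hψm : MonotoneOn ψ (Icc u v)) :
    ∫ s in u..v, psiKernel ψ α t s = ((ψ t - ψ u) ^ α - (ψ t - ψ v) ^ α) / α := by
  have hIoo : Ioo (min u v) (max u v) = Ioo u v := by rw [min_eq_left huv, max_eq_right huv]
  have hsubst := intervalIntegral.integral_comp_mul_deriv_of_deriv_nonneg (f' := deriv ψ)
    (g := fun x => (ψ t - x) ^ (α - 1)) (uIcc_of_le huv ▸ hψc)
    (hIoo ▸ fun s hs => hψd.hasDerivAt (Ioo_mem_nhds hs.1 hs.2))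
    (hIoo ▸ fun s hs => hψm.deriv_nonneg_of_mem_Ioo hs)
  simp only [Function.comp_def] at hsubst
  simp only [psiKernel, mul_comm (deriv ψ _), hsubst,
    intervalIntegral.integral_comp_sub_left (fun x => x ^ (α - 1)),
    integral_rpow (Or.inl (by linarith : (-1:ℝ) < α - 1)), sub_add_cancel]

lemma abs_integral_mul_le_of_nonneg {g h : ℝ → ℝ} {B : ℝ} (huv : u ≤ v)
    (hg : IntervalIntegrable g volume u v) (hg0 : ∀ s ∈ Ioo u v, 0 ≤ g s)
    (hB : ∀ s ∈ Ioo u v, |h s| ≤ B) :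
    |∫ s in u..v, g s * h s| ≤ B * ∫ s in u..v, g s := by
  rw [← intervalIntegral.integral_const_mul, ← Real.norm_eq_abs]
  refine intervalIntegral.norm_integral_le_of_norm_le huv ?_ (hg.const_mul B)
  rw [← ae_restrict_iff' measurableSet_Ioc]
  refine ae_restrict_Ioc_of_forall_Ioo fun s hs => ?_
  rw [norm_mul, Real.norm_eq_abs, Real.norm_eq_abs, abs_of_nonneg (hg0 s hs), mul_comm B]
  exact mul_le_mul_of_nonneg_left (hB s hs) (hg0 s hs)

lemma psiKernel_le_psiKernel {w s : ℝ} (hα1 : α ≤ 1) (hψs : 0 ≤ deriv ψ s)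
    (hst : ψ s < ψ t) (htw : ψ t ≤ ψ w) : psiKernel ψ α w s ≤ psiKernel ψ α t s :=
  mul_le_mul_of_nonneg_left (rpow_le_rpow_of_nonpos (sub_pos.2 hst) (by linarith) (by linarith)) hψs

lemma intervalIntegrable_psiKernel_mul {h : ℝ → ℝ} {B : ℝ} (hα : 0 < α) (huv : u ≤ v)
    (hψc : ContinuousOn ψ (Icc u v)) (hψd : DifferentiableOn ℝ ψ (Ioo u v))
    (hψm : MonotoneOn ψ (Icc u v)) (hh : AEStronglyMeasurable h (volume.restrict (Ioc u v)))
    (hB : ∀ s ∈ Ioo u v, |h s| ≤ B) :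
    IntervalIntegrable (fun s => psiKernel ψ α t s * h s) volume u v := by
  have hK := intervalIntegrable_psiKernel (t := t) hα huv hψc hψd hψm
  rw [intervalIntegrable_iff_integrableOn_Ioc_of_le huv] at hK ⊢
  exact hK.mul_bdd hh (ae_restrict_Ioc_of_forall_Ioo hB)

lemma abs_integral_psiKernel_mul_le {h : ℝ → ℝ} {B : ℝ} (hα : 0 < α) (huv : u ≤ v)
    (hψc : ContinuousOn ψ (Icc u v)) (hψd : DifferentiableOn ℝ ψ (Ioo u v))
    (hψm : MonotoneOn ψ (Icc u v)) (hvt : ψ v ≤ ψ t) (hB : ∀ s ∈ Ioo u v, |h s| ≤ B) :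
    |∫ s in u..v, psiKernel ψ α t s * h s| ≤
      B * ((ψ t - ψ u) ^ α - (ψ t - ψ v) ^ α) / α := by
  rw [mul_div_assoc, ← integral_psiKernel hα huv hψc hψd hψm]
  refine abs_integral_mul_le_of_nonneg huv (intervalIntegrable_psiKernel hα huv hψc hψd hψm)
    (fun s hs => psiKernel_nonneg hψm hs ?_) hB
  exact (hψm (Ioo_subset_Icc_self hs) (right_mem_Icc.2 huv) hs.2.le).trans hvt

lemma abs_integral_psiKernel_sub_psiKernel_mul_le {w : ℝ} {h : ℝ → ℝ} {B : ℝ} (hα : 0 < α)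
    (hα1 : α ≤ 1) (huv : u ≤ v) (hψc : ContinuousOn ψ (Icc u v))
    (hψd : DifferentiableOn ℝ ψ (Ioo u v)) (hψm : StrictMonoOn ψ (Icc u v)) (hvw : ψ v ≤ ψ w)
    (hB0 : 0 ≤ B) (hB : ∀ s ∈ Ioo u v, |h s| ≤ B) :
    |∫ s in u..v, (psiKernel ψ α w s - psiKernel ψ α v s) * h s| ≤ B * (ψ w - ψ v) ^ α / α := by
  have hKv := intervalIntegrable_psiKernel (t := v) hα huv hψc hψd hψm.monotoneOn
  have hKw := intervalIntegrable_psiKernel (t := w) hα huv hψc hψd hψm.monotoneOn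
  have hmono : (ψ v - ψ u) ^ α ≤ (ψ w - ψ u) ^ α := by
    have := hψm.monotoneOn (left_mem_Icc.2 huv) (right_mem_Icc.2 huv) huv
    exact rpow_le_rpow (by linarith) (by linarith) hα.le
  calc |∫ s in u..v, (psiKernel ψ α w s - psiKernel ψ α v s) * h s|
      = |∫ s in u..v, (psiKernel ψ α v s - psiKernel ψ α w s) * -h s| := by
        simp only [mul_neg, ← neg_mul, neg_sub]
    _ ≤ B * ∫ s in u..v, (psiKernel ψ α v s - psiKernel ψ α w s) := by
        refine abs_integral_mul_le_of_nonneg huv (hKv.sub hKw) (fun s hs => ?_)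
          (fun s hs => (abs_neg (h s)).trans_le (hB s hs))
        exact sub_nonneg.2 (psiKernel_le_psiKernel hα1 (hψm.monotoneOn.deriv_nonneg_of_mem_Ioo hs)
          (hψm (Ioo_subset_Icc_self hs) (right_mem_Icc.2 huv) hs.2) hvw)
    _ = B * (((ψ v - ψ u) ^ α - (ψ w - ψ u) ^ α + (ψ w - ψ v) ^ α) / α) := by
        rw [intervalIntegral.integral_sub hKv hKw, integral_psiKernel hα huv hψc hψd hψm.monotoneOn,
          integral_psiKernel hα huv hψc hψd hψm.monotoneOn, sub_self, zero_rpow hα.ne']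
        ring
    _ ≤ B * (ψ w - ψ v) ^ α / α := by
        rw [mul_div_assoc]
        gcongr
        linarith

end Kernel

section FracIntegral

variable {ψ : ℝ → ℝ} {α B t : ℝ} {h h₁ h₂ : ℝ → ℝ}

lemma psiFracIntegral_congr (ht : 0 ≤ t) (heq : EqOn h₁ h₂ (Ioc 0 t)) :
    psiFracIntegral ψ α h₁ t = psiFracIntegral ψ α h₂ t := by
  refine congrArg _ (intervalIntegral.integral_congr_ae ?_)
  refine Eventually.of_forall fun s hs => ?_
  rw [uIoc_of_le ht] at hs
  rw [heq hs]

lemma psiFracIntegral_sub (hα : 0 < α) (ht : t ∈ Icc (0:ℝ) 1)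
    (hψc : ContinuousOn ψ (Icc 0 1)) (hψd : DifferentiableOn ℝ ψ (Ioo 0 1))
    (hψm : MonotoneOn ψ (Icc 0 1))
    (hh₁ : AEStronglyMeasurable h₁ (volume.restrict (Ioc 0 1))) (hB₁ : ∀ s ∈ Ioo 0 1, |h₁ s| ≤ B)
    (hh₂ : AEStronglyMeasurable h₂ (volume.restrict (Ioc 0 1))) (hB₂ : ∀ s ∈ Ioo 0 1, |h₂ s| ≤ B) :
    psiFracIntegral ψ α h₁ t - psiFracIntegral ψ α h₂ t =
      psiFracIntegral ψ α (fun s => h₁ s - h₂ s) t := by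
  have hsub : Ioc (0:ℝ) t ⊆ Ioc 0 1 := Ioc_subset_Ioc_right ht.2
  have hint : ∀ {h : ℝ → ℝ}, AEStronglyMeasurable h (volume.restrict (Ioc 0 1)) →
      (∀ s ∈ Ioo 0 1, |h s| ≤ B) →
      IntervalIntegrable (fun s => psiKernel ψ α t s * h s) volume 0 t := fun hh hB =>
    intervalIntegrable_psiKernel_mul hα ht.1 (hψc.mono (Icc_subset_Icc_right ht.2))
      (hψd.mono (Ioo_subset_Ioo_right ht.2)) (hψm.mono (Icc_subset_Icc_right ht.2))
      (hh.mono_set hsub)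
      (fun s hs => hB s (Ioo_subset_Ioo_right ht.2 hs))
  rw [psiFracIntegral, psiFracIntegral, psiFracIntegral, ← mul_sub,
    ← intervalIntegral.integral_sub (hint hh₁ hB₁) (hint hh₂ hB₂)]
  simp only [mul_sub]

lemma abs_psiFracIntegral_le (hα : 0 < α) (ht : t ∈ Icc (0:ℝ) 1)
    (hψc : ContinuousOn ψ (Icc 0 1)) (hψd : DifferentiableOn ℝ ψ (Ioo 0 1))
    (hψm : MonotoneOn ψ (Icc 0 1)) (hB0 : 0 ≤ B) (hB : ∀ s ∈ Ioo 0 1, |h s| ≤ B) :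
    |psiFracIntegral ψ α h t| ≤ B * (ψ 1 - ψ 0) ^ α / Gamma (α + 1) := by
  have hI := abs_integral_psiKernel_mul_le (t := t) hα ht.1 (hψc.mono (Icc_subset_Icc_right ht.2))
    (hψd.mono (Ioo_subset_Ioo_right ht.2)) (hψm.mono (Icc_subset_Icc_right ht.2)) le_rfl
    (fun s hs => hB s (Ioo_subset_Ioo_right ht.2 hs))
  rw [sub_self, zero_rpow hα.ne', sub_zero] at hI
  have h0t : ψ 0 ≤ ψ t := hψm (left_mem_Icc.2 zero_le_one) ht ht.1
  have ht1 : ψ t ≤ ψ 1 := hψm ht (right_mem_Icc.2 zero_le_one) ht.2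
  calc |psiFracIntegral ψ α h t|
      = 1 / Gamma α * |∫ s in (0:ℝ)..t, psiKernel ψ α t s * h s| := by
        rw [psiFracIntegral, abs_mul, abs_of_pos (by positivity)]
    _ ≤ 1 / Gamma α * (B * (ψ t - ψ 0) ^ α / α) := by gcongr
    _ ≤ 1 / Gamma α * (B * (ψ 1 - ψ 0) ^ α / α) := by gcongr
    _ = B * (ψ 1 - ψ 0) ^ α / Gamma (α + 1) := by
        rw [Gamma_add_one hα.ne']
        field_simp

lemma psiFracIntegral_sub_psiFracIntegral {t' : ℝ} (hα : 0 < α) (ht : t ∈ Icc (0:ℝ) 1)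
    (ht' : t' ∈ Icc (0:ℝ) 1) (htt' : t ≤ t')
    (hψc : ContinuousOn ψ (Icc 0 1)) (hψd : DifferentiableOn ℝ ψ (Ioo 0 1))
    (hψm : MonotoneOn ψ (Icc 0 1)) (hh : AEStronglyMeasurable h (volume.restrict (Ioc 0 1)))
    (hB : ∀ s ∈ Ioo 0 1, |h s| ≤ B) :
    psiFracIntegral ψ α h t' - psiFracIntegral ψ α h t =
      1 / Gamma α * ((∫ s in (0:ℝ)..t, (psiKernel ψ α t' s - psiKernel ψ α t s) * h s) +
        ∫ s in t..t', psiKernel ψ α t' s * h s) := by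
  have hint : ∀ {u v w : ℝ}, 0 ≤ u → u ≤ v → v ≤ 1 →
      IntervalIntegrable (fun s => psiKernel ψ α w s * h s) volume u v := fun hu huv hv =>
    intervalIntegrable_psiKernel_mul hα huv (hψc.mono (Icc_subset_Icc hu hv))
      (hψd.mono (Ioo_subset_Ioo hu hv)) (hψm.mono (Icc_subset_Icc hu hv))
      (hh.mono_set (Ioc_subset_Ioc hu hv)) fun s hs => hB s (Ioo_subset_Ioo hu hv hs)
  rw [psiFracIntegral, psiFracIntegral, ← mul_sub,
    ← intervalIntegral.integral_add_adjacent_intervals (hint le_rfl ht.1 ht.2)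
      (hint ht.1 htt' ht'.2)]
  simp only [sub_mul]
  rw [intervalIntegral.integral_sub (hint le_rfl ht.1 ht.2) (hint le_rfl ht.1 ht.2)]
  ring

lemma abs_psiFracIntegral_sub_le {t' : ℝ} (hα : 0 < α) (hα1 : α ≤ 1) (ht : t ∈ Icc (0:ℝ) 1)
    (ht' : t' ∈ Icc (0:ℝ) 1) (htt' : t ≤ t')
    (hψc : ContinuousOn ψ (Icc 0 1)) (hψd : DifferentiableOn ℝ ψ (Ioo 0 1))
    (hψm : StrictMonoOn ψ (Icc 0 1)) (hh : AEStronglyMeasurable h (volume.restrict (Ioc 0 1)))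
    (hB0 : 0 ≤ B) (hB : ∀ s ∈ Ioo 0 1, |h s| ≤ B) :
    |psiFracIntegral ψ α h t' - psiFracIntegral ψ α h t| ≤
      2 * B * (ψ t' - ψ t) ^ α / Gamma (α + 1) := by
  have hI₁ := abs_integral_psiKernel_sub_psiKernel_mul_le hα hα1 ht.1
    (hψc.mono (Icc_subset_Icc_right ht.2)) (hψd.mono (Ioo_subset_Ioo_right ht.2))
    (hψm.mono (Icc_subset_Icc_right ht.2)) (hψm.monotoneOn ht ht' htt') hB0
    fun s hs => hB s (Ioo_subset_Ioo_right ht.2 hs)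
  have hI₂ := abs_integral_psiKernel_mul_le hα htt' (hψc.mono (Icc_subset_Icc ht.1 ht'.2))
    (hψd.mono (Ioo_subset_Ioo ht.1 ht'.2)) (hψm.monotoneOn.mono (Icc_subset_Icc ht.1 ht'.2))
    le_rfl fun s hs => hB s (Ioo_subset_Ioo ht.1 ht'.2 hs)
  rw [sub_self, zero_rpow hα.ne', sub_zero] at hI₂
  rw [psiFracIntegral_sub_psiFracIntegral hα ht ht' htt' hψc hψd hψm.monotoneOn hh hB, abs_mul,
    abs_of_pos (by positivity)]
  calc 1 / Gamma α * |(∫ s in (0:ℝ)..t, (psiKernel ψ α t' s - psiKernel ψ α t s) * h s) +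
          ∫ s in t..t', psiKernel ψ α t' s * h s|
      ≤ 1 / Gamma α * (B * (ψ t' - ψ t) ^ α / α + B * (ψ t' - ψ t) ^ α / α) := by
        gcongr
        exact (abs_add_le _ _).trans (add_le_add hI₁ hI₂)
    _ = 2 * B * (ψ t' - ψ t) ^ α / Gamma (α + 1) := by
        rw [Gamma_add_one hα.ne']
        field_simp
        ring

lemma ContinuousOn.of_abs_sub_le_rpow {X : Type*} [TopologicalSpace X] {ψ G : X → ℝ}
    {s : Set X} {C α : ℝ} (hα : 0 < α) (hψ : ContinuousOn ψ s)
    (hG : ∀ t ∈ s, ∀ t' ∈ s, |G t' - G t| ≤ C * |ψ t' - ψ t| ^ α) :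
    ContinuousOn G s := by
  intro t ht
  have hlim : Tendsto (fun t' => C * |ψ t' - ψ t| ^ α) (𝓝[s] t) (𝓝 0) := by
    have hcont := (((hψ t ht).sub (continuousWithinAt_const (b := ψ t))).abs.rpow_const
      (Or.inr hα.le)).const_mul C
    simpa [zero_rpow hα.ne'] using hcont.tendsto
  rw [ContinuousWithinAt, tendsto_iff_dist_tendsto_zero]
  exact squeeze_zero' (Eventually.of_forall fun _ => dist_nonneg)
    (eventually_nhdsWithin_of_forall fun t' ht' => (Real.dist_eq _ _).trans_le (hG t ht t' ht'))
    hlim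

lemma continuousOn_psiFracIntegral (hα : 0 < α) (hα1 : α ≤ 1)
    (hψc : ContinuousOn ψ (Icc 0 1)) (hψd : DifferentiableOn ℝ ψ (Ioo 0 1))
    (hψm : StrictMonoOn ψ (Icc 0 1)) (hh : AEStronglyMeasurable h (volume.restrict (Ioc 0 1)))
    (hB0 : 0 ≤ B) (hB : ∀ s ∈ Ioo 0 1, |h s| ≤ B) :
    ContinuousOn (psiFracIntegral ψ α h) (Icc 0 1) := by
  refine hψc.of_abs_sub_le_rpow (C := 2 * B / Gamma (α + 1)) hα fun t ht t' ht' => ?_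
  rcases le_total t t' with htt' | ht't
  · rw [abs_of_nonneg (sub_nonneg.2 (hψm.monotoneOn ht ht' htt')), div_mul_eq_mul_div]
    exact abs_psiFracIntegral_sub_le hα hα1 ht ht' htt' hψc hψd hψm hh hB0 hB
  · rw [abs_sub_comm, abs_sub_comm (ψ t'),
      abs_of_nonneg (sub_nonneg.2 (hψm.monotoneOn ht' ht ht't)), div_mul_eq_mul_div]
    exact abs_psiFracIntegral_sub_le hα hα1 ht' ht ht't hψc hψd hψm hh hB0 hB

end FracIntegral

section IntegralEquation

variable {ψ : ℝ → ℝ} {f : ℝ → ℝ → ℝ} {α M L : ℝ}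

lemma exists_contractingWith_psiFracIntegral (hα : 0 < α) (hα1 : α ≤ 1)
    (hψc : ContinuousOn ψ (Icc 0 1)) (hψd : DifferentiableOn ℝ ψ (Ioo 0 1))
    (hψm : StrictMonoOn ψ (Icc 0 1)) (hfcont : Continuous (fun p : ℝ × ℝ => f p.1 p.2))
    (hbdd : ∀ t ∈ Icc (0:ℝ) 1, ∀ y : ℝ, |f t y| ≤ M)
    (hLip : ∀ t ∈ Icc (0:ℝ) 1, ∀ x y : ℝ, |f t x - f t y| ≤ L * |x - y|)
    (hcontr : L * (ψ 1 - ψ 0) ^ α / Gamma (α + 1) < 1) :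
    ∃ (K : NNReal) (Φ : C(Icc (0:ℝ) 1, ℝ) → C(Icc (0:ℝ) 1, ℝ)), ContractingWith K Φ ∧
      ∀ Y t, Φ Y t = psiFracIntegral ψ α (fun s => f s (IccExtend zero_le_one Y s)) t := by
  have h0 : (0:ℝ) ∈ Icc 0 1 := left_mem_Icc.2 zero_le_one
  have hM0 : 0 ≤ M := (abs_nonneg _).trans (hbdd 0 h0 0)
  have hL0 : 0 ≤ L := by simpa using (abs_nonneg _).trans (hLip 0 h0 1 0)
  have hk0 : 0 ≤ L * (ψ 1 - ψ 0) ^ α / Gamma (α + 1) :=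
    div_nonneg (mul_nonneg hL0 (rpow_nonneg (sub_nonneg.2 (hψm.monotoneOn h0
      (right_mem_Icc.2 zero_le_one) zero_le_one)) _)) (Gamma_pos_of_pos (by linarith)).le
  set F : C(Icc (0:ℝ) 1, ℝ) → ℝ → ℝ := fun Y s => f s (IccExtend zero_le_one Y s)
  have hFm : ∀ Y, AEStronglyMeasurable (F Y) (volume.restrict (Ioc 0 1)) := fun Y =>
    (hfcont.comp (continuous_id.prodMk Y.continuous.Icc_extend')).aestronglyMeasurable
  have hFB : ∀ Y, ∀ s ∈ Ioo (0:ℝ) 1, |F Y s| ≤ M := fun Y s hs =>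
    hbdd s (Ioo_subset_Icc_self hs) _
  let Φ : C(Icc (0:ℝ) 1, ℝ) → C(Icc (0:ℝ) 1, ℝ) := fun Y =>
    ⟨(Icc 0 1).domRestrict (psiFracIntegral ψ α (F Y)),
      (continuousOn_psiFracIntegral hα hα1 hψc hψd hψm (hFm Y) hM0 (hFB Y)).domRestrict⟩
  refine ⟨⟨_, hk0⟩, Φ, ⟨hcontr, LipschitzWith.of_dist_le_mul fun Y Z => ?_⟩, fun Y t => rfl⟩
  refine (ContinuousMap.dist_le (mul_nonneg hk0 dist_nonneg)).2 fun t => ?_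
  rw [Real.dist_eq]
  change |psiFracIntegral ψ α (F Y) t - psiFracIntegral ψ α (F Z) t| ≤ _
  rw [psiFracIntegral_sub hα t.2 hψc hψd hψm.monotoneOn (hFm Y) (hFB Y) (hFm Z) (hFB Z)]
  refine (abs_psiFracIntegral_le hα t.2 hψc hψd hψm.monotoneOn (mul_nonneg hL0 dist_nonneg)
    fun s hs => ?_).trans_eq (by ring)
  exact (hLip s (Ioo_subset_Icc_self hs) _ _).trans
    (mul_le_mul_of_nonneg_left ((Real.dist_eq _ _).symm.trans_le
      (ContinuousMap.dist_apply_le_dist _)) hL0)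

theorem exists_continuousOn_eq_psiFracIntegral_and_unique (hα : 0 < α) (hα1 : α ≤ 1)
    (hψc : ContinuousOn ψ (Icc 0 1)) (hψd : DifferentiableOn ℝ ψ (Ioo 0 1))
    (hψm : StrictMonoOn ψ (Icc 0 1)) (hfcont : Continuous (fun p : ℝ × ℝ => f p.1 p.2))
    (hbdd : ∀ t ∈ Icc (0:ℝ) 1, ∀ y : ℝ, |f t y| ≤ M)
    (hLip : ∀ t ∈ Icc (0:ℝ) 1, ∀ x y : ℝ, |f t x - f t y| ≤ L * |x - y|)
    (hcontr : L * (ψ 1 - ψ 0) ^ α / Gamma (α + 1) < 1) :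
    ∃ y : ℝ → ℝ, ContinuousOn y (Icc 0 1) ∧
      (∀ t ∈ Icc (0:ℝ) 1, y t = psiFracIntegral ψ α (fun s => f s (y s)) t) ∧
      ∀ z : ℝ → ℝ, AEStronglyMeasurable z (volume.restrict (Ioc 0 1)) →
        (∀ t ∈ Ioc (0:ℝ) 1, z t = psiFracIntegral ψ α (fun s => f s (z s)) t) →
        EqOn z y (Ioc 0 1) := by
  obtain ⟨K, Φ, hΦ, hΦeq⟩ :=
    exists_contractingWith_psiFracIntegral hα hα1 hψc hψd hψm hfcont hbdd hLip hcontr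
  set Y := ContractingWith.fixedPoint Φ hΦ
  have hY : Φ Y = Y := hΦ.fixedPoint_isFixedPt
  refine ⟨IccExtend zero_le_one Y, Y.continuous.Icc_extend'.continuousOn, fun t ht => ?_,
    fun z hz hzeq t ht => ?_⟩
  · rw [IccExtend_of_mem _ _ ht, ← hΦeq Y ⟨t, ht⟩, hY]
  -- `z` agrees on `(0, 1]` with `z'`, which is continuous on `[0, 1]` and so yields a fixed point.
  set z' := psiFracIntegral ψ α (fun s => f s (z s))
  have hz'c : ContinuousOn z' (Icc 0 1) :=
    continuousOn_psiFracIntegral hα hα1 hψc hψd hψm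
      (hfcont.measurable.comp_aemeasurable
        (aemeasurable_id.prodMk hz.aemeasurable)).aestronglyMeasurable
      ((abs_nonneg _).trans (hbdd 0 (left_mem_Icc.2 zero_le_one) 0))
      fun s hs => hbdd s (Ioo_subset_Icc_self hs) _
  let Z : C(Icc (0:ℝ) 1, ℝ) := ⟨(Icc 0 1).domRestrict z', hz'c.domRestrict⟩
  have hZ : Φ Z = Z := by
    ext ⟨t, ht⟩
    refine (hΦeq Z ⟨t, ht⟩).trans (psiFracIntegral_congr ht.1 fun s hs => ?_)
    have hs1 : s ∈ Ioc (0:ℝ) 1 := Ioc_subset_Ioc_right ht.2 hs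
    simp only [IccExtend_of_mem _ _ (Ioc_subset_Icc_self hs1)]
    exact congrArg (f s) (hzeq s hs1).symm
  rw [hzeq t ht, IccExtend_of_mem _ _ (Ioc_subset_Icc_self ht),
    show Y = Z from (hΦ.fixedPoint_unique hZ).symm]
  rfl

end IntegralEquation

lemma memWeighted_of_continuousOn {ψ y : ℝ → ℝ} {γ : ℝ} (hψc : ContinuousOn ψ (Icc 0 1))
    (hγ : γ ≤ 1) (hy : ContinuousOn y (Icc 0 1)) : MemWeighted ψ γ y :=
  ⟨fun t => (ψ t - ψ 0) ^ (1 - γ) * y t,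
    ((hψc.sub continuousOn_const).rpow_const fun _ _ => Or.inr (by linarith)).mul hy,
    fun _ _ => rfl⟩

lemma MemWeighted.continuousOn_Ioc {ψ y : ℝ → ℝ} {γ : ℝ} (hy : MemWeighted ψ γ y)
    (hψc : ContinuousOn ψ (Icc 0 1)) (hψm : StrictMonoOn ψ (Icc 0 1)) :
    ContinuousOn y (Ioc 0 1) := by
  obtain ⟨g, hg, hgy⟩ := hy
  have hpos : ∀ t ∈ Ioc (0:ℝ) 1, 0 < ψ t - ψ 0 := fun t ht =>
    sub_pos.2 (hψm (left_mem_Icc.2 zero_le_one) (Ioc_subset_Icc_self ht) ht.1)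
  refine ((((hψc.mono Ioc_subset_Icc_self).sub continuousOn_const).rpow_const (p := γ - 1)
    fun t ht => Or.inl (hpos t ht).ne').mul (hg.mono Ioc_subset_Icc_self)).congr fun t ht => ?_
  simp only [Pi.mul_apply, Pi.sub_apply, hgy t ht, ← mul_assoc, ← rpow_add (hpos t ht)]
  simp

theorem existence_uniqueness_general (α β γ M L : ℝ) (ψ : ℝ → ℝ) (f : ℝ → ℝ → ℝ)
    (hψ : ContDiffOn ℝ 1 ψ (Icc (0:ℝ) 1)) (hmono : StrictMonoOn ψ (Icc (0:ℝ) 1))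
    (hα0 : 0 < α) (hα1 : α < 1) (hβ1 : β ≤ 1)
    (hγ : γ = α + β * (1 - α))
    (hfcont : Continuous (fun p : ℝ × ℝ => f p.1 p.2))
    (hbdd : ∀ t ∈ Icc (0:ℝ) 1, ∀ y : ℝ, |f t y| ≤ M)
    (hLip : ∀ t ∈ Icc (0:ℝ) 1, ∀ x y : ℝ, |f t x - f t y| ≤ L * |x - y|)
    (hcontr : L * (ψ 1 - ψ 0) ^ α / Real.Gamma (α + 1) < 1) :
    ∃ y : ℝ → ℝ, MemWeighted ψ γ y ∧
      (∀ t ∈ Ioc (0:ℝ) 1,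
        y t = (1 / Real.Gamma α) *
          ∫ s in (0:ℝ)..t, deriv ψ s * (ψ t - ψ s) ^ (α - 1) * f s (y s)) ∧
      ∀ z : ℝ → ℝ, MemWeighted ψ γ z →
        (∀ t ∈ Ioc (0:ℝ) 1,
          z t = (1 / Real.Gamma α) *
            ∫ s in (0:ℝ)..t, deriv ψ s * (ψ t - ψ s) ^ (α - 1) * f s (z s)) →
        ∀ t ∈ Ioc (0:ℝ) 1, z t = y t := by
  have hψc := hψ.continuousOn
  have hψd : DifferentiableOn ℝ ψ (Ioo 0 1) :=
    (hψ.differentiableOn one_ne_zero).mono Ioo_subset_Icc_self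
  obtain ⟨y, hyc, hy, hyuniq⟩ := exists_continuousOn_eq_psiFracIntegral_and_unique hα0 hα1.le
    hψc hψd hmono hfcont hbdd hLip hcontr
  refine ⟨y, memWeighted_of_continuousOn hψc (by nlinarith) hyc,
    fun t ht => hy t (Ioc_subset_Icc_self ht), fun z hz hzeq =>
      hyuniq z ((hz.continuousOn_Ioc hψc hmono).aestronglyMeasurable measurableSet_Ioc) hzeq⟩

theorem existence_uniqueness (α β γ M L : ℝ) (ψ : ℝ → ℝ) (f : ℝ → ℝ → ℝ)
    (hψ : ContDiffOn ℝ 1 ψ (Icc (0:ℝ) 1)) (hmono : StrictMonoOn ψ (Icc (0:ℝ) 1))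
    (hψ' : ∀ x ∈ Icc (0:ℝ) 1, 0 < deriv ψ x)
    (hα0 : 0 < α) (hα1 : α < 1) (hβ0 : 0 ≤ β) (hβ1 : β ≤ 1)
    (hγ : γ = α + β * (1 - α))
    (hfcont : Continuous (fun p : ℝ × ℝ => f p.1 p.2))
    (hM : 0 < M) (hbdd : ∀ t ∈ Icc (0:ℝ) 1, ∀ y : ℝ, |f t y| ≤ M)
    (hL : 0 < L) (hLip : ∀ t ∈ Icc (0:ℝ) 1, ∀ x y : ℝ, |f t x - f t y| ≤ L * |x - y|)
    (hcontr : L * (ψ 1 - ψ 0) ^ α / Real.Gamma (α + 1) < 1) :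
    ∃ y : ℝ → ℝ, MemWeighted ψ γ y ∧
      (∀ t ∈ Ioc (0:ℝ) 1,
        y t = (1 / Real.Gamma α) *
          ∫ s in (0:ℝ)..t, deriv ψ s * (ψ t - ψ s) ^ (α - 1) * f s (y s)) ∧
      ∀ z : ℝ → ℝ, MemWeighted ψ γ z →
        (∀ t ∈ Ioc (0:ℝ) 1,
          z t = (1 / Real.Gamma α) *
            ∫ s in (0:ℝ)..t, deriv ψ s * (ψ t - ψ s) ^ (α - 1) * f s (z s)) →
        ∀ t ∈ Ioc (0:ℝ) 1, z t = y t :=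
  existence_uniqueness_general α β γ M L ψ f hψ hmono hα0 hα1 hβ1 hγ hfcont hbdd hLip hcontr
end
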